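/- Let p be a prime and k a field of characteristic p. In R = k[x_0, …, x_p] (p+1 variables) take f = x_0^{p+1} + ⋯ + x_p^{p+1} and let 𝔇 be the associated relations submodule. Then there exists c ∈ k with c ≠ 0 such that (x_0⋯x_p)^{p²} ≡ c · (x_0⋯x_p) (mod 𝔇). (This is the pole-order reduction proving Corollary 8.3: the (p−1)-dimensional Fermat variety x_0^{p+1} + ⋯ + x_p^{p+1} = 0 in P^p is a Calabi–Yau variety whose a-number equals its dimension p−1.) -/

import Mathlib

open MvPolynomial

/-- The operator `D_i(g) = x_i·(∂g/∂x_i) + x_i·(∂f/∂x_i)·g` associated to `f`. -/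
noncomputable def Dop {k : Type*} [Field k] {N : ℕ} (f : MvPolynomial (Fin N) k)
    (i : Fin N) (g : MvPolynomial (Fin N) k) : MvPolynomial (Fin N) k :=
  X i * pderiv i g + X i * pderiv i f * g

/-- The relations submodule `𝔇` associated to `f`: the `k`-linear span of
all the `D_i(g)` for `g` a polynomial and `i` an index. -/
noncomputable def relMod {k : Type*} [Field k] {N : ℕ} (f : MvPolynomial (Fin N) k) :
    Submodule k (MvPolynomial (Fin N) k) :=
  Submodule.span k {h | ∃ i g, h = Dop f i g}

/-! If `∂h/∂x_i = 0` then `D_i(x_i^a h) = a·x_i^a h + x_i (∂f/∂x_i)·x_i^a h`, and for the Fermat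
polynomial `f = ∑ x_j^n` of a degree `n ≡ 1` in `k` one has `x_i ∂f/∂x_i = x_i^n`. So
`x_i^{a+n} h ≡ -a·x_i^a h (mod 𝔇)`, and iterating from `a = 1` gives
`x_i^{1+mn} h ≡ (-1)^m m!·x_i h`. For `n = p + 1` and `m = p - 1` the exponent `1 + mn` is `p²`
and `(p-1)!` is a unit in `k`; reducing one variable at a time gives the claim. -/

namespace MvPolynomial

variable {σ R : Type*} [CommSemiring R]

theorem X_mul_pderiv_X_pow (i : σ) (a : ℕ) :
    (X i : MvPolynomial σ R) * pderiv i (X i ^ a) = a • X i ^ a := by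
  simp only [X_pow_eq_monomial, X_mul_pderiv_monomial, Finsupp.single_eq_same]

theorem pderiv_prod_eq_zero {ι : Type*} {i : σ} {s : Finset ι} {q : ι → MvPolynomial σ R}
    (h : ∀ j ∈ s, pderiv i (q j) = 0) : pderiv i (∏ j ∈ s, q j) = 0 :=
  Finset.prod_induction _ (fun r => pderiv i r = 0)
    (fun a b ha hb => by rw [pderiv_mul, ha, hb, zero_mul, mul_zero, add_zero]) pderiv_one h

theorem X_mul_pderiv_sum_X_pow [Fintype σ] (i : σ) (n : ℕ) :
    (X i : MvPolynomial σ R) * pderiv i (∑ j, X j ^ n) = n • X i ^ n := by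
  rw [map_sum, Finset.mul_sum, Finset.sum_eq_single i, X_mul_pderiv_X_pow]
  · intro j _ hji
    rw [pderiv_pow, pderiv_X_of_ne hji, mul_zero, mul_zero]
  · simp

end MvPolynomial

section Relations

variable {k : Type*} [Field k] {N : ℕ} (f : MvPolynomial (Fin N) k)

theorem Dop_mem_relMod (i : Fin N) (g : MvPolynomial (Fin N) k) : Dop f i g ∈ relMod f :=
  Submodule.subset_span ⟨i, g, rfl⟩

theorem X_mul_pderiv_mul_smodEq {i : Fin N} {h : MvPolynomial (Fin N) k}
    (hh : pderiv i h = 0) (a : ℕ) :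
    X i * pderiv i f * (X i ^ a * h) ≡ -(a : k) • (X i ^ a * h) [SMOD relMod f] := by
  have hD : Dop f i (X i ^ a * h)
      = (a : k) • (X i ^ a * h) + X i * pderiv i f * (X i ^ a * h) := by
    rw [Dop, pderiv_mul, hh, mul_zero, add_zero, ← mul_assoc, X_mul_pderiv_X_pow,
      ← Nat.cast_smul_eq_nsmul k, smul_mul_assoc]
  rw [SModEq.sub_mem, neg_smul, sub_neg_eq_add, add_comm, ← hD]
  exact Dop_mem_relMod f i _

end Relations

section Fermat

variable {k : Type*} [Field k] {N n : ℕ}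

local notation "fermat" => (∑ j : Fin N, X j ^ n : MvPolynomial (Fin N) k)

theorem X_pow_mul_smodEq_fermat (hn : (n : k) = 1) {i : Fin N} {h : MvPolynomial (Fin N) k}
    (hh : pderiv i h = 0) (m : ℕ) :
    X i ^ (1 + m * n) * h ≡ ((-1) ^ m * m.factorial : k) • (X i * h) [SMOD relMod fermat] := by
  induction m with
  | zero => simp
  | succ m ih =>
    have hstep := X_mul_pderiv_mul_smodEq fermat hh (1 + m * n)
    have hcoeff : ((1 + m * n : ℕ) : k) = m + 1 := by push_cast; rw [hn]; ring
    rw [X_mul_pderiv_sum_X_pow, ← Nat.cast_smul_eq_nsmul k, hn, one_smul, ← mul_assoc, ← pow_add,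
      hcoeff] at hstep
    have hscalar :
        -((m : k) + 1) * ((-1) ^ m * m.factorial) = (-1) ^ (m + 1) * (m + 1).factorial := by
      push_cast [Nat.factorial_succ]
      ring
    rw [show 1 + (m + 1) * n = n + (1 + m * n) by ring, ← hscalar, ← smul_smul]
    exact hstep.trans (ih.smul _)

theorem prod_X_pow_mul_smodEq_fermat (hn : (n : k) = 1) (m : ℕ) (s : Finset (Fin N))
    {g : MvPolynomial (Fin N) k} (hg : ∀ i ∈ s, pderiv i g = 0) :
    (∏ i ∈ s, X i ^ (1 + m * n)) * g
      ≡ ((-1) ^ m * m.factorial : k) ^ s.card • ((∏ i ∈ s, X i) * g) [SMOD relMod fermat] := by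
  induction s using Finset.induction generalizing g with
  | empty => simp
  | @insert j s hj ih =>
    have hg' : ∀ i ∈ s, pderiv i (X j ^ (1 + m * n) * g) = 0 := fun i hi => by
      rw [pderiv_mul, pderiv_pow, pderiv_X_of_ne (ne_of_mem_of_not_mem hi hj).symm,
        hg i (Finset.mem_insert_of_mem hi), mul_zero, zero_mul, mul_zero, add_zero]
    have hj' : pderiv j ((∏ i ∈ s, X i) * g) = 0 := by
      rw [pderiv_mul, pderiv_prod_eq_zero fun i hi => pderiv_X_of_ne (ne_of_mem_of_not_mem hi hj),
        hg j (Finset.mem_insert_self j s), zero_mul, mul_zero, add_zero]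
    set c : k := (-1) ^ m * m.factorial
    calc (∏ i ∈ insert j s, X i ^ (1 + m * n)) * g
        = (∏ i ∈ s, X i ^ (1 + m * n)) * (X j ^ (1 + m * n) * g) := by
          rw [Finset.prod_insert hj]; ring
      _ ≡ c ^ s.card • ((∏ i ∈ s, X i) * (X j ^ (1 + m * n) * g)) [SMOD relMod fermat] := ih hg'
      _ = c ^ s.card • (X j ^ (1 + m * n) * ((∏ i ∈ s, X i) * g)) := by rw [mul_left_comm]
      _ ≡ c ^ s.card • c • (X j * ((∏ i ∈ s, X i) * g)) [SMOD relMod fermat] :=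
          (X_pow_mul_smodEq_fermat hn hj' m).smul _
      _ = c ^ (insert j s).card • ((∏ i ∈ insert j s, X i) * g) := by
          rw [smul_smul, Finset.prod_insert hj, Finset.card_insert_of_notMem hj, pow_succ,
            mul_assoc]

end Fermat

theorem Nat.Prime.cast_factorial_pred_ne_zero {p : ℕ} (hp : p.Prime) (R : Type*)
    [AddGroupWithOne R] [CharP R p] : ((p - 1).factorial : R) ≠ 0 := by
  rw [Ne, CharP.cast_eq_zero_iff R p, hp.dvd_factorial]
  have := hp.pos
  omega

/-- Pole-order reduction proving Corollary 8.3: for the `(p−1)`-dimensional Fermat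
variety `x_0^{p+1} + ⋯ + x_p^{p+1} = 0` in `P^p` one has
`(x_0⋯x_p)^{p²} ≡ c·(x_0⋯x_p) (mod 𝔇)` for some nonzero `c ∈ k`. -/
theorem stmt2 (p : ℕ) (hp : p.Prime) (k : Type*) [Field k] [CharP k p] :
    ∃ c : k, c ≠ 0 ∧
      ((∏ i : Fin (p + 1), X i ^ (p ^ 2)) - C c * ∏ i : Fin (p + 1), X i)
        ∈ relMod (∑ i : Fin (p + 1), X i ^ (p + 1) : MvPolynomial (Fin (p + 1)) k) := by
  have hdeg : ((p + 1 : ℕ) : k) = 1 := by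
    rw [Nat.cast_succ, CharP.cast_eq_zero, zero_add]
  have hexp : 1 + (p - 1) * (p + 1) = p ^ 2 := by
    obtain ⟨q, rfl⟩ := Nat.exists_eq_add_one_of_ne_zero hp.ne_zero
    simp only [Nat.add_sub_cancel]
    ring
  have hred := prod_X_pow_mul_smodEq_fermat (N := p + 1) hdeg (p - 1) Finset.univ (g := 1) (by simp)
  rw [hexp, mul_one, mul_one, Finset.card_univ, Fintype.card_fin] at hred
  refine ⟨((-1) ^ (p - 1) * (p - 1).factorial) ^ (p + 1), ?_, ?_⟩
  · exact pow_ne_zero _ (mul_ne_zero (pow_ne_zero _ (neg_ne_zero.2 one_ne_zero))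
      (hp.cast_factorial_pred_ne_zero k))
  · rw [← smul_eq_C_mul, ← SModEq.sub_mem]
    exact hred
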